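/- For every t with |t| ≤ π, D̂(t) has a unique complex square root s with positive real part, and this root satisfies |s − (1 + γ − βe^{it})| ≤ 5.81γ. -/

import Mathlib

open Complex

noncomputable section

/-- `e^{a i t}` -/
def expi (a : ℂ) (t : ℝ) : ℂ := Complex.exp (a * Complex.I * (t : ℂ))

/-- `e^{it}` -/
def eit (t : ℝ) : ℂ := expi 1 t

/-- `D̂(t) = (1 − γ + βe^{it})² − 4e^{it}(β − γ(1−α))` -/
def Dhat (α β γ : ℝ) (t : ℝ) : ℂ :=
  (1 - (γ : ℂ) + (β : ℂ) * eit t) ^ 2 - 4 * eit t * ((β : ℂ) - (γ : ℂ) * (1 - (α : ℂ)))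

/-- The square root of `D̂(t)` with positive real part (junk value `0` if none exists). -/
def sqrtD (α β γ : ℝ) (t : ℝ) : ℂ :=
  letI := Classical.propDecidable (∃ s : ℂ, s ^ 2 = Dhat α β γ t ∧ 0 < s.re)
  if h : ∃ s : ℂ, s ^ 2 = Dhat α β γ t ∧ 0 < s.re then h.choose else 0

def Lam1 (α β γ : ℝ) (t : ℝ) : ℂ := (1 - (γ : ℂ) + (β : ℂ) * eit t + sqrtD α β γ t) / 2

def Lam2 (α β γ : ℝ) (t : ℝ) : ℂ := (1 - (γ : ℂ) + (β : ℂ) * eit t - sqrtD α β γ t) / 2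

/-- Common numerator of `Ŵ₁, Ŵ₂, V̂, V̂₁, V̂₂` with `L` in place of `Λ_j` (resp. `Δ̂`). -/
def Wnum (α β γ : ℝ) (d : ℕ) (L : ℂ) (t : ℝ) : ℂ :=
  (expi ((d : ℂ) + 1) t - 1) * ((β : ℂ) - (γ : ℂ) * (1 - (α : ℂ)))
    - (expi (d : ℂ) t - 1) * L
    + (eit t - 1) * ((γ : ℂ) * L - (β : ℂ) + (γ : ℂ) * (1 - (α : ℂ)))

def W1denom (α β γ : ℝ) (d : ℕ) (t : ℝ) : ℂ :=
  (Lam1 α β γ t - expi (d : ℂ) t) * sqrtD α β γ t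

def W2denom (α β γ : ℝ) (d : ℕ) (t : ℝ) : ℂ :=
  -((Lam2 α β γ t - expi (d : ℂ) t) * sqrtD α β γ t)

def W1 (α β γ : ℝ) (d : ℕ) (t : ℝ) : ℂ :=
  Wnum α β γ d (Lam1 α β γ t) t / W1denom α β γ d t

def W2 (α β γ : ℝ) (d : ℕ) (t : ℝ) : ℂ :=
  Wnum α β γ d (Lam2 α β γ t) t / W2denom α β γ d t

def W3denom (α β γ : ℝ) (d : ℕ) (t : ℝ) : ℂ :=
  (expi ((d : ℂ) - 1) t - (β : ℂ)) * (expi (d : ℂ) t - (1 - (γ : ℂ)))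
    - (γ : ℂ) * (1 - (α : ℂ) - (β : ℂ))

def W3 (α β γ : ℝ) (d : ℕ) (t : ℝ) : ℂ :=
  (α : ℂ) * (γ : ℂ) * expi (d : ℂ) t / W3denom α β γ d t

def Hhat (β : ℝ) (t : ℝ) : ℂ := (1 - (β : ℂ)) * eit t / (1 - (β : ℂ) * eit t)

def Psihat (α β : ℝ) (t : ℝ) : ℂ :=
  (1 - (α : ℂ) - (β : ℂ)) * eit t / (1 - (β : ℂ) * eit t)

def A1 (α β γ : ℝ) (t : ℝ) : ℂ :=
  (1 - (β : ℂ)) * (Psihat α β t - 1) / (1 + (γ : ℂ) - (β : ℂ))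

def A2 (α β γ : ℝ) (t : ℝ) : ℂ :=
  -((β : ℂ) * (1 - (β : ℂ)) * (Hhat β t - 1) * (Psihat α β t - 1)) / (1 + (γ : ℂ) - (β : ℂ)) ^ 2

def A3 (α β γ : ℝ) (t : ℝ) : ℂ :=
  (β : ℂ) ^ 2 * (1 - (β : ℂ)) * (Hhat β t - 1) ^ 2 * (Psihat α β t - 1)
    / (1 + (γ : ℂ) - (β : ℂ)) ^ 3

def A4 (α β γ : ℝ) (t : ℝ) : ℂ :=
  -((1 - (β : ℂ)) ^ 3 * (Psihat α β t - 1) ^ 2)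
    / ((1 + (γ : ℂ) - (β : ℂ)) ^ 3 * (1 - (β : ℂ) * eit t))

def A5 (α β γ : ℝ) (t : ℝ) : ℂ :=
  3 * (β : ℂ) * (1 - (β : ℂ)) ^ 3 * (Psihat α β t - 1) ^ 2 * (Hhat β t - 1)
    / ((1 + (γ : ℂ) - (β : ℂ)) ^ 4 * (1 - (β : ℂ) * eit t))

def A6 (α β γ : ℝ) (t : ℝ) : ℂ :=
  2 * (1 - (β : ℂ)) ^ 5 * (Psihat α β t - 1) ^ 3
    / ((1 + (γ : ℂ) - (β : ℂ)) ^ 5 * (1 - (β : ℂ) * eit t) ^ 2)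

def Ahat (α β γ : ℝ) (t : ℝ) : ℂ :=
  1 + A1 α β γ t * (γ : ℂ) + (A2 α β γ t + A4 α β γ t) * (γ : ℂ) ^ 2
    + (A3 α β γ t + A5 α β γ t + A6 α β γ t) * (γ : ℂ) ^ 3

def DeltaHat (α β γ : ℝ) (t : ℝ) : ℂ := 1 + A1 α β γ t * (γ : ℂ)

def Delta1Hat (α β γ : ℝ) (t : ℝ) : ℂ :=
  1 + A1 α β γ t * (γ : ℂ) + (A2 α β γ t + A4 α β γ t) * (γ : ℂ) ^ 2

def Ghat (α β γ : ℝ) (t : ℝ) : ℂ :=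
  Complex.exp (Ahat α β γ t - 1
    - (A1 α β γ t ^ 2 * (γ : ℂ) ^ 2
        + 2 * A1 α β γ t * (A2 α β γ t + A4 α β γ t) * (γ : ℂ) ^ 3) / 2
    + A1 α β γ t ^ 3 * (γ : ℂ) ^ 3 / 3)

def G1hat (α β γ : ℝ) (t : ℝ) : ℂ :=
  Complex.exp (A1 α β γ t * (γ : ℂ)
    + (A2 α β γ t + A4 α β γ t - A1 α β γ t ^ 2 / 2) * (γ : ℂ) ^ 2)

def Vhat (α β γ : ℝ) (d : ℕ) (t : ℝ) : ℂ :=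
  Wnum α β γ d (DeltaHat α β γ t) t /
    ((Ahat α β γ t - expi (d : ℂ) t)
      * (2 * DeltaHat α β γ t - 1 + (γ : ℂ) - (β : ℂ) * eit t))

def V1hat (α β γ : ℝ) (d : ℕ) (t : ℝ) : ℂ :=
  Wnum α β γ d (DeltaHat α β γ t) t /
    ((Delta1Hat α β γ t - expi (d : ℂ) t)
      * (2 * DeltaHat α β γ t - 1 + (γ : ℂ) - (β : ℂ) * eit t))

def V2hat (α β γ : ℝ) (d : ℕ) (t : ℝ) : ℂ :=
  Wnum α β γ d (DeltaHat α β γ t) t /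
    ((Delta1Hat α β γ t - expi (d : ℂ) t)
      * (2 * Delta1Hat α β γ t - 1 + (γ : ℂ) - (β : ℂ) * eit t))

/-- `f(1) = 0, f(2) = 1, f(3) = d` (states indexed `0,1,2`). -/
def fval (d : ℕ) : Fin 3 → ℤ := ![0, 1, (d : ℤ)]

/-- Transition matrix of the Markov chain. -/
def Pmat (α β γ : ℝ) : Fin 3 → Fin 3 → ℝ :=
  ![![1 - γ, γ, 0], ![1 - α - β, β, α], ![0, 0, 1]]

/-- The path `(ξ₀, ξ₁, …, ξ_n)` obtained by prepending the initial (healthy) state. -/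
def path (n : ℕ) (s : Fin n → Fin 3) : Fin (n + 1) → Fin 3 := Fin.cons 0 s

/-- `F_n{m}`: the mass the distribution of `f(ξ₁) + ⋯ + f(ξ_n)` puts on `m`,
for the chain started at the healthy state `0`. -/
def Fmass (α β γ : ℝ) (d n : ℕ) (m : ℤ) : ℝ :=
  ∑ s ∈ Finset.univ.filter (fun s : Fin n → Fin 3 => (∑ k, fval d (s k)) = m),
    ∏ k : Fin n, Pmat α β γ (path n s k.castSucc) (path n s k.succ)

/-- The characteristic function `Σ_{m ∈ ℤ} F_n{m} e^{imt}` of `F_n`. -/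
def charFn (α β γ : ℝ) (d n : ℕ) (t : ℝ) : ℂ :=
  ∑' m : ℤ, (Fmass α β γ d n m : ℂ) * expi (m : ℂ) t

/-- Mass at `k ∈ ℤ` of the signed measure associated with the Fourier transform `Mhat`. -/
def massOf (Mhat : ℝ → ℂ) (k : ℤ) : ℂ :=
  (1 / (2 * Real.pi)) *
    ∫ t in (-Real.pi)..Real.pi, Complex.exp (-(k : ℂ) * Complex.I * (t : ℂ)) * Mhat t

/-- Fourier transform of the signed measure `GⁿV + E`. -/
def approxGnVE (α β γ : ℝ) (d n : ℕ) (t : ℝ) : ℂ :=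
  Ghat α β γ t ^ n * Vhat α β γ d t + expi ((n : ℂ) * (d : ℂ)) t * W3 α β γ d t

/-- Fourier transform of the signed measure `G₁ⁿV₁ + E`. -/
def approxG1nV1E (α β γ : ℝ) (d n : ℕ) (t : ℝ) : ℂ :=
  G1hat α β γ t ^ n * V1hat α β γ d t + expi ((n : ℂ) * (d : ℂ)) t * W3 α β γ d t

/-- Fourier transform of the signed measure `G₁ⁿV₂ + E`. -/
def approxG1nV2E (α β γ : ℝ) (d n : ℕ) (t : ℝ) : ℂ :=
  G1hat α β γ t ^ n * V2hat α β γ d t + expi ((n : ℂ) * (d : ℂ)) t * W3 α β γ d t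

/-- Fourier transform of the signed measure `E`. -/
def approxE (α β γ : ℝ) (d n : ℕ) (t : ℝ) : ℂ :=
  expi ((n : ℂ) * (d : ℂ)) t * W3 α β γ d t

/-- Mass at `k` of the difference `F_n − M`, where `M` has Fourier transform `Mhat`. -/
def diffMass (α β γ : ℝ) (d n : ℕ) (Mhat : ℝ → ℂ) (k : ℤ) : ℂ :=
  (Fmass α β γ d n k : ℂ) - massOf Mhat k

/-- Condition (C) of the paper. -/
def condC (C₀ α β γ : ℝ) : Prop :=
  0 < α ∧ α < 1 ∧ 0 < β ∧ β < 1 ∧ 0 < γ ∧ γ < 1 ∧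
    β ≤ 0.15 ∧ γ ≤ 0.05 ∧ α ≤ C₀ ∧ α + β < 1

/-!
Write `w = 1 + γ − βe^{it}`, so that `D̂(t) = w² − 4γ(1 − (1 − α)e^{it})`; thus `D̂(t)` lies within
`8γ` of `w²`, and `Re w² ≥ 1 − 2β` keeps `Re D̂(t) ≥ 0.3`. A complex number off the closed negative
real axis has exactly one square root in the right half-plane, namely the principal one. For such a
root `s`, `(s − w)(s + w) = D̂(t) − w²` and `Re (s + w) ≥ √0.3 + 0.85 > 1.397`, whence
`‖s − w‖ ≤ 8γ / 1.397 ≤ 5.81γ`.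
-/

namespace Complex

theorem re_sq_le_sq_re (s : ℂ) : (s ^ 2).re ≤ s.re ^ 2 := by
  rw [sq, mul_re]
  nlinarith [sq_nonneg s.im]

theorem eq_of_sq_eq_sq_of_re_pos {s s' : ℂ} (h : s ^ 2 = s' ^ 2) (hs : 0 < s.re)
    (hs' : 0 < s'.re) : s = s' := by
  rcases sq_eq_sq_iff_eq_or_eq_neg.mp h with h | h
  · exact h
  · have : s.re = -s'.re := by rw [h, neg_re]
    linarith

theorem re_cpow_inv_two_pos {x : ℂ} (hx : x ∈ slitPlane) : 0 < (x ^ (2⁻¹ : ℂ)).re := by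
  rw [cpow_inv_two_re, Real.sqrt_pos]
  rcases mem_slitPlane_iff.mp hx with hre | him
  · linarith [re_le_norm x]
  · linarith [neg_le_abs x.re, abs_re_lt_norm.mpr him]

theorem existsUnique_sq_eq_and_re_pos {x : ℂ} (hx : x ∈ slitPlane) :
    ∃! s : ℂ, s ^ 2 = x ∧ 0 < s.re :=
  ⟨x ^ (2⁻¹ : ℂ), ⟨cpow_ofNat_inv_pow x 2, re_cpow_inv_two_pos hx⟩,
    fun _ ⟨hs, hre⟩ ↦ eq_of_sq_eq_sq_of_re_pos (hs.trans (cpow_ofNat_inv_pow x 2).symm) hre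
      (re_cpow_inv_two_pos hx)⟩

theorem norm_sub_mul_le_norm_sq_sub_sq {s : ℂ} (hs : 0 ≤ s.re) (w : ℂ) :
    ‖s - w‖ * (√(s ^ 2).re + w.re) ≤ ‖s ^ 2 - w ^ 2‖ := by
  have hsqrt : √(s ^ 2).re ≤ s.re :=
    Real.sqrt_le_iff.mpr ⟨hs, re_sq_le_sq_re s⟩
  calc ‖s - w‖ * (√(s ^ 2).re + w.re) ≤ ‖s - w‖ * ‖s + w‖ := by
        gcongr
        exact (add_le_add_left hsqrt _).trans (re_le_norm (s + w))
    _ = ‖s ^ 2 - w ^ 2‖ := by rw [← norm_mul]; ring_nf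

end Complex

open Complex

section UnitDisk

variable {α β γ : ℝ} {e : ℂ}

theorem re_one_add_sub_mul_ge (hβ : 0 ≤ β) (he : ‖e‖ ≤ 1) :
    1 + γ - β ≤ (1 + (γ : ℂ) - β * e).re := by
  simp only [sub_re, add_re, one_re, ofReal_re, re_ofReal_mul]
  nlinarith [re_le_norm e]

theorem re_sq_one_add_sub_mul_ge (hβ : 0 ≤ β) (hβ1 : β ≤ 1) (hγ : 0 ≤ γ) (he : ‖e‖ ≤ 1) :
    1 - 2 * β ≤ ((1 + (γ : ℂ) - β * e) ^ 2).re := by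
  have hre := re_one_add_sub_mul_ge (γ := γ) hβ he
  have him : (1 + (γ : ℂ) - β * e).im ^ 2 ≤ β ^ 2 := by
    simp only [sub_im, add_im, one_im, ofReal_im, im_ofReal_mul, zero_add, zero_sub, neg_sq]
    have := sq_le_one_iff_abs_le_one e.im |>.mpr ((abs_im_le_norm e).trans he)
    nlinarith
  rw [sq, mul_re, ← sq, ← sq]
  nlinarith

theorem norm_four_mul_one_sub_mul_le (hα0 : 0 ≤ α) (hα1 : α ≤ 1) (hγ : 0 ≤ γ) (he : ‖e‖ ≤ 1) :
    ‖4 * (γ : ℂ) * (1 - (1 - α) * e)‖ ≤ 8 * γ := by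
  have h1α : ‖(1 : ℂ) - α‖ ≤ 1 := by
    rw [← ofReal_one, ← ofReal_sub, norm_real, Real.norm_eq_abs, abs_le]
    constructor <;> linarith
  have : ‖1 - (1 - α) * e‖ ≤ 2 :=
    calc ‖1 - (1 - α) * e‖ ≤ ‖(1 : ℂ)‖ + ‖(1 : ℂ) - α‖ * ‖e‖ := by
          rw [← norm_mul]; exact norm_sub_le _ _
      _ ≤ 2 := by rw [norm_one]; nlinarith [norm_nonneg e, norm_nonneg ((1 : ℂ) - α)]
  rw [norm_mul, norm_mul, norm_real, Real.norm_eq_abs, abs_of_nonneg hγ, RCLike.norm_ofNat]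
  nlinarith

end UnitDisk

theorem norm_eit (t : ℝ) : ‖eit t‖ = 1 := by
  rw [eit, expi, one_mul, mul_comm, norm_exp_ofReal_mul_I]

theorem Dhat_eq (α β γ t : ℝ) :
    Dhat α β γ t = (1 + (γ : ℂ) - β * eit t) ^ 2 - 4 * γ * (1 - (1 - α) * eit t) := by
  rw [Dhat]; ring

theorem stmt1_general (C₀ : ℝ)
    (α β γ : ℝ) (h : condC C₀ α β γ) (t : ℝ) :
    (∃! s : ℂ, s ^ 2 = Dhat α β γ t ∧ 0 < s.re) ∧
    ∀ s : ℂ, s ^ 2 = Dhat α β γ t → 0 < s.re →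
      ‖s - (1 + (γ : ℂ) - (β : ℂ) * eit t)‖ ≤ 5.81 * γ := by
  obtain ⟨hα0, -, hβ0, -, hγ0, -, hβ, hγ, -, hαβ⟩ := h
  have he := (norm_eit t).le
  set w : ℂ := 1 + (γ : ℂ) - β * eit t
  have hclose : ‖w ^ 2 - Dhat α β γ t‖ ≤ 8 * γ := by
    rw [Dhat_eq, sub_sub_cancel]
    exact norm_four_mul_one_sub_mul_le hα0.le (by linarith) hγ0.le he
  have hDre : 0.3 ≤ (Dhat α β γ t).re := by
    have hw2 := re_sq_one_add_sub_mul_ge hβ0.le (by linarith) hγ0.le he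
    have hgap := (re_le_norm _).trans hclose
    rw [sub_re] at hgap
    linarith
  refine ⟨existsUnique_sq_eq_and_re_pos (mem_slitPlane_iff.mpr (.inl (by linarith))),
    fun s hs hsre ↦ ?_⟩
  have hwre : 0.85 ≤ w.re := by linarith [re_one_add_sub_mul_ge (γ := γ) hβ0.le he]
  have hsqrt : (0.547 : ℝ) ≤ √(Dhat α β γ t).re := Real.le_sqrt_of_sq_le (by linarith)
  have key := norm_sub_mul_le_norm_sq_sub_sq hsre.le w
  rw [hs, norm_sub_rev (Dhat α β γ t)] at key
  nlinarith [norm_nonneg (s - w)]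

/-- existence and uniqueness of the square root of `D̂(t)` with positive
real part, and the short expansion `√D̂(t) = 1 + γ − βe^{it} + 5.81θγ`. -/
theorem stmt1 (C₀ : ℝ) (hC₀ : C₀ ∈ Set.Ioo (0 : ℝ) 1)
    (α β γ : ℝ) (h : condC C₀ α β γ) (t : ℝ) (ht : |t| ≤ Real.pi) :
    (∃! s : ℂ, s ^ 2 = Dhat α β γ t ∧ 0 < s.re) ∧
    ∀ s : ℂ, s ^ 2 = Dhat α β γ t → 0 < s.re →
      ‖s - (1 + (γ : ℂ) - (β : ℂ) * eit t)‖ ≤ 5.81 * γ :=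
  stmt1_general C₀ α β γ h t
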